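/- (Minkowski-type theorem, necessity.) Let R = ∂B be a nondegenerate convex reflector with focal function p. Then p is positive and bounded on Sⁿ, and whenever x, y, y₁, …, y_k ∈ Sⁿ and α₁, …, α_k ≥ 0 with Σᵢαᵢ > 0 satisfy x − y = Σ_{i=1}^{k} αᵢ(x − yᵢ) with the vectors x − y₁, …, x − y_k linearly independent, the inequality p(y) ≤ Σ_{i=1}^{k} αᵢ p(yᵢ) holds. -/

import Mathlib

open scoped InnerProductSpace ENNReal
open Metric Set

noncomputable section

/-- Euclidean space `ℝ^{n+1}`. -/
abbrev E (n : ℕ) : Type := EuclideanSpace ℝ (Fin (n + 1))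

/-- The unit sphere `Sⁿ` centered at the origin in `ℝ^{n+1}`. -/
def sph (n : ℕ) : Set (E n) := Metric.sphere (0 : E n) 1

/-- `B` is the convex body of a nondegenerate convex reflector: `B` is the intersection of the
solid confocal paraboloids `{X : ‖X‖ - ⟪X,y⟫ ≤ p̃ y}` for some `p̃ : Sⁿ → (0,∞]`
(encoded via `ENNReal`), `B` is compact and the origin is an interior point of `B`.
The reflector itself is `R = frontier B`. -/
def IsReflectorBody (n : ℕ) (B : Set (E n)) : Prop :=
  IsCompact B ∧ (0 : E n) ∈ interior B ∧
    ∃ pt : E n → ℝ≥0∞, (∀ y ∈ sph n, 0 < pt y) ∧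
      B = {X : E n | ∀ y ∈ sph n, ENNReal.ofReal (‖X‖ - ⟪X, y⟫_ℝ) ≤ pt y}

/-- The focal function `p(y) = sup_{X ∈ B} (‖X‖ - ⟪X, y⟫)` of the reflector `∂B`. -/
def focal (n : ℕ) (B : Set (E n)) (y : E n) : ℝ :=
  sSup ((fun X => ‖X‖ - ⟪X, y⟫_ℝ) '' B)

/-- The radial function `ρ(x) = sup {λ ≥ 0 : λ x ∈ B}`. -/
def radial (n : ℕ) (B : Set (E n)) (x : E n) : ℝ :=
  sSup {l : ℝ | 0 ≤ l ∧ l • x ∈ B}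

/-- The support function `h(U) = sup_{X ∈ B} ⟪X, U⟫`. -/
def suppFn (n : ℕ) (B : Set (E n)) (U : E n) : ℝ :=
  sSup ((fun X => ⟪X, U⟫_ℝ) '' B)

/-- The extended focal function `P(Y) = sup_{X ∈ B} (‖X‖‖Y‖ - ⟪X, Y⟫)` on all of `ℝ^{n+1}`. -/
def extFocal (n : ℕ) (B : Set (E n)) (Y : E n) : ℝ :=
  sSup ((fun X => ‖X‖ * ‖Y‖ - ⟪X, Y⟫_ℝ) '' B)

/-- The directrix `D(R) = {X - ‖X‖y : X ∈ R, y ∈ Sⁿ, ‖X‖ - ⟪X,y⟫ = p(y)}` of the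
reflector `R = frontier B`. -/
def directrix (n : ℕ) (B : Set (E n)) : Set (E n) :=
  {Z : E n | ∃ X ∈ frontier B, ∃ y ∈ sph n,
    ‖X‖ - ⟪X, y⟫_ℝ = focal n B y ∧ Z = X - ‖X‖ • y}

/-!
For fixed `X`, the quantity `‖X‖ - ⟪X, z⟫` is affine in `z` and nonnegative on the unit ball.
The relation `x - y = ∑ αᵢ (x - yᵢ)` says `y = (1 - s) x + ∑ αᵢ yᵢ` with `s = ∑ αᵢ`, so
`‖X‖ - ⟪X, y⟫ = (1 - s)(‖X‖ - ⟪X, x⟫) + ∑ αᵢ (‖X‖ - ⟪X, yᵢ⟫)`.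
Taking `X = y` makes the left side vanish, which forces `s ≥ 1` unless `x = y = yᵢ` for some
`αᵢ > 0`, excluded by linear independence. With `s ≥ 1` the first term is `≤ 0` for every
`X ∈ B`, and taking the supremum over `B` gives `p(y) ≤ ∑ αᵢ p(yᵢ)`.
Positivity comes from a small ball around `0` inside `B`, boundedness from compactness.
-/

section Affine

variable {F : Type*} [NormedAddCommGroup F] [InnerProductSpace ℝ F]

lemma norm_sub_inner_nonneg_of_norm_le_one (X : F) {z : F} (hz : ‖z‖ ≤ 1) :
    0 ≤ ‖X‖ - ⟪X, z⟫_ℝ := by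
  have := real_inner_le_norm X z
  nlinarith [norm_nonneg X]

lemma norm_sub_inner_eq_of_sub_eq_sum {ι : Type*} [Fintype ι] {x y : F} {ys : ι → F}
    {a : ι → ℝ} (h : x - y = ∑ i, a i • (x - ys i)) (X : F) :
    ‖X‖ - ⟪X, y⟫_ℝ =
      (1 - ∑ i, a i) * (‖X‖ - ⟪X, x⟫_ℝ) + ∑ i, a i * (‖X‖ - ⟪X, ys i⟫_ℝ) := by
  have hX := congrArg (fun v => ⟪X, v⟫_ℝ) h
  simp only [inner_sub_right, inner_sum, real_inner_smul_right, mul_sub,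
    Finset.sum_sub_distrib, ← Finset.sum_mul] at hX ⊢
  linarith

lemma one_le_sum_of_sub_eq_sum {ι : Type*} [Fintype ι] {x y : F} {ys : ι → F} {a : ι → ℝ}
    (hx : ‖x‖ = 1) (hy : ‖y‖ = 1) (hys : ∀ i, ‖ys i‖ = 1) (ha : ∀ i, 0 ≤ a i)
    (hpos : 0 < ∑ i, a i) (hne : ∀ i, ys i ≠ x) (h : x - y = ∑ i, a i • (x - ys i)) :
    1 ≤ ∑ i, a i := by
  by_contra! hlt
  have hzero := norm_sub_inner_eq_of_sub_eq_sum h y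
  rw [real_inner_self_eq_norm_sq, hy] at hzero
  have hgap : ∀ i, 0 ≤ 1 - ⟪y, ys i⟫_ℝ := fun i =>
    hy ▸ norm_sub_inner_nonneg_of_norm_le_one y (hys i).le
  have hsum_nonneg : 0 ≤ ∑ i, a i * (1 - ⟪y, ys i⟫_ℝ) :=
    Finset.sum_nonneg fun i _ => mul_nonneg (ha i) (hgap i)
  have hxy_gap : 0 ≤ 1 - ⟪y, x⟫_ℝ := hy ▸ norm_sub_inner_nonneg_of_norm_le_one y hx.le
  have hyx : y = x := by
    have : (1 - ∑ i, a i) * (1 - ⟪y, x⟫_ℝ) = 0 := by nlinarith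
    have : ⟪y, x⟫_ℝ = 1 := by
      rcases mul_eq_zero.mp this with h | h <;> linarith
    exact (inner_eq_one_iff_of_norm_eq_one hy hx).mp this
  subst hyx
  obtain ⟨i, -, hai⟩ :=
    Finset.exists_lt_of_sum_lt (by simpa using hpos : ∑ _i : ι, (0 : ℝ) < ∑ i, a i)
  have hgap_pos : ∀ i, 0 < 1 - ⟪y, ys i⟫_ℝ := fun i =>
    lt_of_le_of_ne (hgap i) fun h0 => hne i <| Eq.symm <|
      (inner_eq_one_iff_of_norm_eq_one hy (hys i)).mp (show ⟪y, ys i⟫_ℝ = 1 by linarith)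
  have : 0 < ∑ i, a i * (1 - ⟪y, ys i⟫_ℝ) :=
    Finset.sum_pos' (fun j _ => mul_nonneg (ha j) (hgap j))
      ⟨i, Finset.mem_univ i, mul_pos hai (hgap_pos i)⟩
  nlinarith

end Affine

section Focal

variable {n : ℕ} {B : Set (E n)}

lemma le_focal (hB : IsCompact B) {X : E n} (hX : X ∈ B) (y : E n) :
    ‖X‖ - ⟪X, y⟫_ℝ ≤ focal n B y :=
  le_csSup (hB.image (by fun_prop)).bddAbove ⟨X, hX, rfl⟩

lemma focal_le (hne : B.Nonempty) {y : E n} {c : ℝ} (h : ∀ X ∈ B, ‖X‖ - ⟪X, y⟫_ℝ ≤ c) :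
    focal n B y ≤ c :=
  csSup_le (hne.image _) (forall_mem_image.2 h)

lemma focal_pos (hB : IsCompact B) (h0 : (0 : E n) ∈ interior B) {y : E n} (hy : ‖y‖ = 1) :
    0 < focal n B y := by
  obtain ⟨ε, hε, hball⟩ := Metric.mem_nhds_iff.mp (mem_interior_iff_mem_nhds.mp h0)
  have hX : (-(ε / 2)) • y ∈ B := hball <| by
    simp [norm_smul, hy, abs_of_pos hε, hε]
  calc 0 < ε := hε
    _ = ‖(-(ε / 2)) • y‖ - ⟪(-(ε / 2)) • y, y⟫_ℝ := by
      rw [norm_smul, real_inner_smul_left, real_inner_self_eq_norm_sq, hy, Real.norm_eq_abs,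
        abs_neg, abs_of_pos (half_pos hε)]
      ring
    _ ≤ focal n B y := le_focal hB hX y

lemma focal_le_two_mul (hne : B.Nonempty) {M : ℝ} (hM : ∀ X ∈ B, ‖X‖ ≤ M) {y : E n}
    (hy : ‖y‖ = 1) : focal n B y ≤ 2 * M :=
  focal_le hne fun X hX => by
    have := neg_le_of_abs_le (abs_real_inner_le_norm X y)
    rw [hy, mul_one] at this
    linarith [hM X hX]

lemma focal_le_sum (hB : IsCompact B) (hne : B.Nonempty) {ι : Type*} [Fintype ι]
    {x y : E n} {ys : ι → E n} {a : ι → ℝ} (hx : ‖x‖ = 1) (hs : 1 ≤ ∑ i, a i)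
    (ha : ∀ i, 0 ≤ a i) (h : x - y = ∑ i, a i • (x - ys i)) :
    focal n B y ≤ ∑ i, a i * focal n B (ys i) :=
  focal_le hne fun X hX => by
    rw [norm_sub_inner_eq_of_sub_eq_sum h X]
    have hfirst : (1 - ∑ i, a i) * (‖X‖ - ⟪X, x⟫_ℝ) ≤ 0 :=
      mul_nonpos_of_nonpos_of_nonneg (by linarith)
        (norm_sub_inner_nonneg_of_norm_le_one X hx.le)
    have hrest : ∑ i, a i * (‖X‖ - ⟪X, ys i⟫_ℝ) ≤ ∑ i, a i * focal n B (ys i) :=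
      Finset.sum_le_sum fun i _ => mul_le_mul_of_nonneg_left (le_focal hB hX (ys i)) (ha i)
    linarith

end Focal

theorem statement8_general (n : ℕ) (B : Set (E n)) (hB : IsReflectorBody n B) :
    (∀ y ∈ sph n, 0 < focal n B y) ∧
    (∃ M : ℝ, ∀ y ∈ sph n, focal n B y ≤ M) ∧
    (∀ x y : E n, x ∈ sph n → y ∈ sph n →
      ∀ (k : ℕ) (ys : Fin k → E n) (a : Fin k → ℝ),
        (∀ i, ys i ∈ sph n) → (∀ i, 0 ≤ a i) → 0 < ∑ i, a i →
        x - y = ∑ i, a i • (x - ys i) →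
        LinearIndependent ℝ (fun i => x - ys i) →
        focal n B y ≤ ∑ i, a i * focal n B (ys i)) := by
  obtain ⟨hcpt, h0, -⟩ := hB
  have hne : B.Nonempty := ⟨0, interior_subset h0⟩
  obtain ⟨M, hM⟩ := isBounded_iff_forall_norm_le.mp hcpt.isBounded
  refine ⟨fun y hy => focal_pos hcpt h0 (mem_sphere_zero_iff_norm.mp hy),
    ⟨2 * M, fun y hy => focal_le_two_mul hne hM (mem_sphere_zero_iff_norm.mp hy)⟩, ?_⟩
  intro x y hx hy k ys a hys ha hpos h hli
  have hx1 := mem_sphere_zero_iff_norm.mp hx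
  have hs : 1 ≤ ∑ i, a i :=
    one_le_sum_of_sub_eq_sum hx1 (mem_sphere_zero_iff_norm.mp hy)
      (fun i => mem_sphere_zero_iff_norm.mp (hys i)) ha hpos
      (fun i hi => hli.ne_zero i (by rw [hi, sub_self])) h
  exact focal_le_sum hcpt hne hx1 hs ha h

/-- Minkowski-type theorem, necessity: The focal function `p` of a
nondegenerate convex reflector is positive and bounded on `Sⁿ`, and whenever
`x, y, y₁, …, y_k ∈ Sⁿ`, `αᵢ ≥ 0`, `Σαᵢ > 0`, `x - y = Σ αᵢ (x - yᵢ)` with the vectors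
`x - y₁, …, x - y_k` linearly independent, one has `p(y) ≤ Σ αᵢ p(yᵢ)`. -/
theorem statement8 (n : ℕ) (hn : 1 ≤ n) (B : Set (E n)) (hB : IsReflectorBody n B) :
    (∀ y ∈ sph n, 0 < focal n B y) ∧
    (∃ M : ℝ, ∀ y ∈ sph n, focal n B y ≤ M) ∧
    (∀ x y : E n, x ∈ sph n → y ∈ sph n →
      ∀ (k : ℕ) (ys : Fin k → E n) (a : Fin k → ℝ),
        (∀ i, ys i ∈ sph n) → (∀ i, 0 ≤ a i) → 0 < ∑ i, a i →
        x - y = ∑ i, a i • (x - ys i) →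
        LinearIndependent ℝ (fun i => x - ys i) →
        focal n B y ≤ ∑ i, a i * focal n B (ys i)) :=
  statement8_general n B hB
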